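/- arXiv:0807.0782 — 4 statements merged into one kernel-verified Lean document; each statement's English description precedes it below -/
import Mathlib

section
/- Suppose H(·; α_0) attains its minimum over P_k^+ at a unique point f̂_0 (a well separated global minimum). If α_t → α_0 in P_m^+ and for each t the point f̂_t ∈ P_k^+ is a minimizer of H(·; α_t) over P_k^+, then f̂_t → f̂_0. (Corollary 1 of the paper: the optimal pmf f̂(α) is continuous at every α where H(·,α) has a well separated global minimum.) -/
/-!
The minimizer of `H(·; α₀)` over the compact simplex is the only possible cluster point of
`f̂_t`: along any ultrafilter on which `f̂_t → L`, joint continuity of `H` lets us pass to the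
limit in `H(f̂_t; α_t) ≤ H(f̂₀; α_t)`, giving `H(L; α₀) ≤ H(f̂₀; α₀)`, hence `L = f̂₀`.
-/

open Filter Topology Set Function

theorem IsCompact.tendsto_of_isMinOn_of_unique {X Y ι β : Type*} [TopologicalSpace X]
    [TopologicalSpace Y] [LinearOrder β] [TopologicalSpace β] [OrderClosedTopology β]
    {K : Set X} (hK : IsCompact K) {F : X → Y → β} (hF : ContinuousOn (uncurry F) (K ×ˢ univ))
    {l : Filter ι} {y : ι → Y} {y₀ : Y} (hy : Tendsto y l (𝓝 y₀)) {x : ι → X} {x₀ : X}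
    (hxK : ∀ᶠ i in l, x i ∈ K) (hxmin : ∀ᶠ i in l, IsMinOn (F · (y i)) K (x i))
    (hx₀ : x₀ ∈ K) (hx₀unique : ∀ z ∈ K, z ≠ x₀ → F x₀ y₀ < F z y₀) :
    Tendsto x l (𝓝 x₀) := by
  refine hK.tendsto_nhds_of_unique_mapClusterPt hxK fun L hLK hL => ?_
  by_contra hne
  obtain ⟨U, hUl, hxU⟩ := mapClusterPt_iff_ultrafilter.mp hL
  have hyU : Tendsto y U (𝓝 y₀) := hy.mono_left hUl
  have tendsto_within {z : ι → X} {z₀ : X} (hz₀ : z₀ ∈ K) (hz : Tendsto z U (𝓝 z₀))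
      (hzK : ∀ᶠ i in U, z i ∈ K) : Tendsto (fun i => F (z i) (y i)) U (𝓝 (F z₀ y₀)) :=
    (hF (z₀, y₀) ⟨hz₀, trivial⟩).tendsto.comp <| tendsto_nhdsWithin_iff.mpr
      ⟨hz.prodMk_nhds hyU, hzK.mono fun i hi => ⟨hi, trivial⟩⟩
  have hle : F L y₀ ≤ F x₀ y₀ :=
    le_of_tendsto_of_tendsto (tendsto_within hLK hxU (hxK.filter_mono hUl))
      (tendsto_within hx₀ tendsto_const_nhds (Eventually.of_forall fun _ => hx₀))
      ((hxmin.filter_mono hUl).mono fun _ hi => isMinOn_iff.mp hi x₀ hx₀)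
  exact (hx₀unique L hLK hne).not_ge hle

theorem continuousOn_sum_weight_mul {X ι : Type*} [TopologicalSpace X] [Fintype ι] {K : Set X}
    {G : X → ι → ℝ} (hG : ∀ s, ContinuousOn (G · s) K) :
    ContinuousOn (fun p : X × (ι → ℝ) => ∑ s, p.2 s * G p.1 s) (K ×ˢ univ) :=
  continuousOn_finsetSum _ fun s _ =>
    ((continuous_apply s).comp continuous_snd).continuousOn.mul
      ((hG s).comp continuousOn_fst fun _ hp => hp.1)

theorem covariance_field_fhat_continuous_general
    (n k m : ℕ) (M : Fin k → Fin k → Matrix (Fin n) (Fin n) ℝ)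
    (Sig : (Fin k → ℝ) → Fin k → Matrix (Fin n) (Fin n) ℝ)
    (hSig : ∀ f j, Sig f j = ∑ i : Fin k, f i • M i j)
    (hSigPD : ∀ f ∈ stdSimplex ℝ (Fin k), ∀ j : Fin k, (Sig f j).PosDef)
    (C : Fin k → Fin m → Matrix (Fin n) (Fin n) ℝ)
    (hC : ∀ j s, (C j s).PosDef)
    (h : Matrix (Fin n) (Fin n) ℝ → Matrix (Fin n) (Fin n) ℝ → ℝ)
    (hcont : ContinuousOn
      (fun p : Matrix (Fin n) (Fin n) ℝ × Matrix (Fin n) (Fin n) ℝ => h p.1 p.2)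
      {p | p.1.PosDef ∧ p.2.PosDef})
    (H : (Fin k → ℝ) → (Fin m → ℝ) → ℝ)
    (hH : ∀ f α, H f α = ∑ s : Fin m, α s * ∑ j : Fin k, h (Sig f j) (C j s))
    (α : ℕ → Fin m → ℝ) (α₀ : Fin m → ℝ)
    (hαlim : Tendsto α atTop (nhds α₀))
    (fhat : ℕ → Fin k → ℝ) (fhat₀ : Fin k → ℝ)
    (hfhat : ∀ t, fhat t ∈ stdSimplex ℝ (Fin k))
    (hfhatmin : ∀ t, ∀ g ∈ stdSimplex ℝ (Fin k), H (fhat t) (α t) ≤ H g (α t))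
    (hfhat₀ : fhat₀ ∈ stdSimplex ℝ (Fin k))
    (hfhat₀min : ∀ g ∈ stdSimplex ℝ (Fin k), g ≠ fhat₀ → H fhat₀ α₀ < H g α₀) :
    Tendsto fhat atTop (nhds fhat₀) := by
  have hSig_cont (j : Fin k) : Continuous (Sig · j) := by
    simp only [hSig]
    fun_prop
  have hterm_cont (j : Fin k) (s : Fin m) :
      ContinuousOn (fun f => h (Sig f j) (C j s)) (stdSimplex ℝ (Fin k)) :=
    hcont.comp ((hSig_cont j).prodMk continuous_const).continuousOn
      fun f hf => ⟨hSigPD f hf j, hC j s⟩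
  have hH_cont : ContinuousOn (uncurry H) (stdSimplex ℝ (Fin k) ×ˢ univ) := by
    rw [show uncurry H = _ from funext fun p => hH p.1 p.2]
    exact continuousOn_sum_weight_mul fun s => continuousOn_finsetSum _ fun j _ => hterm_cont j s
  exact (isCompact_stdSimplex ℝ (Fin k)).tendsto_of_isMinOn_of_unique hH_cont hαlim
    (.of_forall hfhat) (.of_forall fun t => isMinOn_iff.mpr (hfhatmin t)) hfhat₀ hfhat₀min

/-- Corollary 1: if `H(·; α_0)` has a well separated (unique) global minimum at `f̂_0`,
`α_t → α_0` and `f̂_t` minimizes `H(·; α_t)` over `P_k^+`, then `f̂_t → f̂_0`. -/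
theorem covariance_field_fhat_continuous
    (n k m : ℕ) (hn : 1 ≤ n) (hk : 1 ≤ k) (hm : 1 ≤ m)
    (M : Fin k → Fin k → Matrix (Fin n) (Fin n) ℝ)
    (Sig : (Fin k → ℝ) → Fin k → Matrix (Fin n) (Fin n) ℝ)
    (hSig : ∀ f j, Sig f j = ∑ i : Fin k, f i • M i j)
    (hSigPD : ∀ f ∈ stdSimplex ℝ (Fin k), ∀ j : Fin k, (Sig f j).PosDef)
    (C : Fin k → Fin m → Matrix (Fin n) (Fin n) ℝ)
    (hC : ∀ j s, (C j s).PosDef)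
    (h : Matrix (Fin n) (Fin n) ℝ → Matrix (Fin n) (Fin n) ℝ → ℝ)
    (hcont : ContinuousOn
      (fun p : Matrix (Fin n) (Fin n) ℝ × Matrix (Fin n) (Fin n) ℝ => h p.1 p.2)
      {p | p.1.PosDef ∧ p.2.PosDef})
    (H : (Fin k → ℝ) → (Fin m → ℝ) → ℝ)
    (hH : ∀ f α, H f α = ∑ s : Fin m, α s * ∑ j : Fin k, h (Sig f j) (C j s))
    (α : ℕ → Fin m → ℝ) (α₀ : Fin m → ℝ)
    (hα : ∀ t, α t ∈ stdSimplex ℝ (Fin m)) (hα₀ : α₀ ∈ stdSimplex ℝ (Fin m))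
    (hαlim : Tendsto α atTop (nhds α₀))
    (fhat : ℕ → Fin k → ℝ) (fhat₀ : Fin k → ℝ)
    (hfhat : ∀ t, fhat t ∈ stdSimplex ℝ (Fin k))
    (hfhatmin : ∀ t, ∀ g ∈ stdSimplex ℝ (Fin k), H (fhat t) (α t) ≤ H g (α t))
    (hfhat₀ : fhat₀ ∈ stdSimplex ℝ (Fin k))
    (hfhat₀min : ∀ g ∈ stdSimplex ℝ (Fin k), g ≠ fhat₀ → H fhat₀ α₀ < H g α₀) :
    Tendsto fhat atTop (nhds fhat₀) :=
  covariance_field_fhat_continuous_general n k m M Sig hSig hSigPD C hC h hcont H hH α α₀ hαlim fhat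
    fhat₀ hfhat hfhatmin hfhat₀ hfhat₀min
end

section
/- If the matrix A has full rank k, then the convex combination f̂ = Σ_{s ∈ Fin m} α_s • f^s lies in P_k^+ and is the unique global minimizer of H_trdif over P_k^+: H_trdif(f̂) ≤ H_trdif(g) for every g ∈ P_k^+, with equality only when g = f̂. (Proposition 2 of the paper: if rank(A) = k then the linear interpolation is the unique solution of the optimization problem for H_trdif.) -/
open Matrix

/-- Proposition 2: if `rank(A) = k` then the linear interpolation
`f̂ = ∑ s, α_s • f^s` lies in `P_k^+` and is the unique global minimizer of
`H_trdif` over `P_k^+`. -/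
theorem linear_interpolation_unique_minimizer_Htrdif
    (k m : ℕ) (hk : 1 ≤ k) (hm : 1 ≤ m)
    (A : Matrix (Fin k) (Fin k) ℝ) (hA : A.rank = k)
    (fs : Fin m → Fin k → ℝ) (hfs : ∀ s, fs s ∈ stdSimplex ℝ (Fin k))
    (c : Fin k → Fin m → ℝ) (hc : ∀ j s, c j s = ∑ i : Fin k, A i j * fs s i)
    (α : Fin m → ℝ) (hα : α ∈ stdSimplex ℝ (Fin m))
    (Htrdif : (Fin k → ℝ) → ℝ)
    (hHtrdif : ∀ f, Htrdif f =
      ∑ s : Fin m, α s * ∑ j : Fin k, (∑ i : Fin k, A i j * f i - c j s) ^ 2)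
    (fhat : Fin k → ℝ) (hfhat : fhat = fun i => ∑ s : Fin m, α s * fs s i) :
    fhat ∈ stdSimplex ℝ (Fin k) ∧
      ∀ g ∈ stdSimplex ℝ (Fin k), Htrdif fhat ≤ Htrdif g ∧
        (Htrdif fhat = Htrdif g → g = fhat) := by
  have hαsum : ∑ s, α s = 1 := hα.2
  -- the linear map g ↦ (j ↦ ∑ i, A i j * g i)
  set T : (Fin k → ℝ) → Fin k → ℝ := fun g j => ∑ i, A i j * g i with hT
  -- T fhat j is the α-average of the c j s
  have hTfhat : ∀ j, T fhat j = ∑ s, α s * c j s := by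
    intro j
    simp only [hT, hfhat, Finset.mul_sum]
    rw [Finset.sum_comm]
    refine Finset.sum_congr rfl fun s _ => ?_
    rw [hc, Finset.mul_sum]
    refine Finset.sum_congr rfl fun i _ => by ring
  -- key pointwise identity
  have key : ∀ (x y : ℝ) (cs : Fin m → ℝ), y = ∑ s, α s * cs s →
      ∑ s, α s * (x - cs s) ^ 2 = (x - y) ^ 2 + ∑ s, α s * (y - cs s) ^ 2 := by
    intro x y cs hy
    have h1 : ∀ s ∈ Finset.univ, α s * (x - cs s) ^ 2 =
        α s * (y - cs s) ^ 2 + ((x ^ 2 - y ^ 2) * α s - 2 * (x - y) * (α s * cs s)) := by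
      intro s _; ring
    rw [Finset.sum_congr rfl h1, Finset.sum_add_distrib, Finset.sum_sub_distrib,
      ← Finset.mul_sum, ← Finset.mul_sum, hαsum, ← hy]
    ring
  -- decomposition of Htrdif
  have hident : ∀ g, Htrdif g = (∑ j, (T g j - T fhat j) ^ 2) + Htrdif fhat := by
    intro g
    have hswap : ∀ f, Htrdif f = ∑ j, ∑ s, α s * (T f j - c j s) ^ 2 := by
      intro f
      rw [hHtrdif]
      simp only [Finset.mul_sum]
      exact Finset.sum_comm
    rw [hswap g, hswap fhat, ← Finset.sum_add_distrib]
    refine Finset.sum_congr rfl fun j _ => ?_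
    exact key (T g j) (T fhat j) (c j ·) (hTfhat j)
  -- injectivity of T
  have hinj : ∀ g, T g = T fhat → g = fhat := by
    have hr : Aᵀ.rank = k := by rw [Matrix.rank_transpose]; exact hA
    have htop : LinearMap.range Aᵀ.mulVecLin = ⊤ := by
      apply Submodule.eq_top_of_finrank_eq
      rw [← Matrix.rank]  -- rank def
      rw [hr, Module.finrank_pi]
      simp
    have hinj' : Function.Injective Aᵀ.mulVecLin :=
      (LinearMap.injective_iff_surjective).mpr (LinearMap.range_eq_top.mp htop)
    intro g hg
    apply hinj'
    simp only [Matrix.mulVecLin_apply]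
    funext j
    have h := congrFun hg j
    simp only [hT] at h
    simpa [Matrix.mulVec, dotProduct, Matrix.transpose_apply] using h
  refine ⟨?_, fun g hg => ?_⟩
  · subst hfhat
    refine ⟨fun i => Finset.sum_nonneg fun s _ =>
      mul_nonneg (hα.1 s) ((hfs s).1 i), ?_⟩
    rw [Finset.sum_comm]
    calc ∑ s, ∑ i, α s * fs s i = ∑ s, α s * ∑ i, fs s i := by
          exact Finset.sum_congr rfl fun s _ => (Finset.mul_sum _ _ _).symm
      _ = ∑ s, α s := by
          exact Finset.sum_congr rfl fun s _ => by rw [(hfs s).2, mul_one]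
      _ = 1 := hαsum
  · constructor
    · rw [hident g]
      have : 0 ≤ ∑ j, (T g j - T fhat j) ^ 2 :=
        Finset.sum_nonneg fun j _ => sq_nonneg _
      linarith
    · intro heq
      have h0 : ∑ j, (T g j - T fhat j) ^ 2 = 0 := by
        have := hident g; linarith
      have hz : ∀ j ∈ Finset.univ, (T g j - T fhat j) ^ 2 = 0 :=
        (Finset.sum_eq_zero_iff_of_nonneg fun j _ => sq_nonneg _).mp h0
      apply hinj
      funext j
      have := hz j (Finset.mem_univ j)
      have := pow_eq_zero_iff (n := 2) (by norm_num) |>.mp this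
      linarith
end

section
/- If the k×k matrix B with entries b_{ij} = ‖u_{ij}‖² has full rank k, then the set D is convex and, for every α ∈ P_m^+, the function H_lik(·; α) is strictly convex on D. (Proposition 3 of the paper: if rank(B) = k, then for all α, H_lik(f; α) is a convex function on the domain of pmfs.) -/
open Matrix

/-!
Each summand `tr (W C⁻¹) - log det (W C⁻¹) - n` is, as a function of a positive definite `W`,
an affine function of `W` minus `log det W`. The function `log det` is strictly concave on positive
definite matrices: writing `A = Q * Q` with `Q = √A`, comparing `A` with `B` amounts to comparing
`1` with `Q⁻¹ B Q⁻¹`, i.e. to the strict concavity of `log` applied to the eigenvalues of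
`Q⁻¹ B Q⁻¹`. Each `W_j` is linear in `f`, and `tr W_j(f) = (fᵀ B)_j`; since `B` is invertible,
two distinct points of `D` differ in some `W_j`, and the strict inequality comes from that `j`.
-/

theorem Real.mul_log_le_log_add_mul {a b x : ℝ} (ha : 0 ≤ a) (hb : 0 ≤ b) (hab : a + b = 1)
    (hx : 0 < x) : b * Real.log x ≤ Real.log (a + b * x) := by
  simpa using strictConcaveOn_log_Ioi.concaveOn.2 (Set.mem_Ioi.2 one_pos) hx ha hb hab

theorem Real.mul_log_lt_log_add_mul {a b x : ℝ} (ha : 0 < a) (hb : 0 < b) (hab : a + b = 1)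
    (hx : 0 < x) (hx1 : x ≠ 1) : b * Real.log x < Real.log (a + b * x) := by
  simpa using strictConcaveOn_log_Ioi.2 (Set.mem_Ioi.2 one_pos) hx hx1.symm ha hb hab

section Convexity

variable {𝕜 E F β ι : Type*} [Semiring 𝕜] [PartialOrder 𝕜] [AddCommMonoid E] [Module 𝕜 E]
  [AddCommMonoid F] [Module 𝕜 F]

theorem Convex.setOf_forall_linearMap_mem {t : Set F} (ht : Convex 𝕜 t) (L : ι → E →ₗ[𝕜] F) :
    Convex 𝕜 {x | ∀ i, L i x ∈ t} := fun x hx y hy a b ha hb hab i => by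
  simpa only [map_add, map_smul] using ht (hx i) (hy i) ha hb hab

theorem StrictConvexOn.sum_comp_linearMap_of_injective [Fintype ι]
    [AddCommMonoid β] [PartialOrder β] [IsOrderedCancelAddMonoid β] [Module 𝕜 β]
    {t : Set F} {φ : ι → F → β} (hφ : ∀ i, StrictConvexOn 𝕜 t (φ i)) (L : ι → E →ₗ[𝕜] F)
    (hL : Function.Injective fun x i => L i x) :
    StrictConvexOn 𝕜 {x | ∀ i, L i x ∈ t} fun x => ∑ i, φ i (L i x) := by
  refine ⟨fun x hx y hy a b ha hb hab i =>
    (hφ i).1.setOf_forall_linearMap_mem L hx hy ha hb hab i, fun x hx y hy hxy a b ha hb hab => ?_⟩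
  obtain ⟨i₀, hi₀⟩ := Function.ne_iff.1 (hL.ne hxy)
  simp only [map_add, map_smul, Finset.smul_sum, ← Finset.sum_add_distrib]
  exact Finset.sum_lt_sum (fun i _ => (hφ i).convexOn.2 (hx i) (hy i) ha.le hb.le hab)
    ⟨i₀, Finset.mem_univ _, (hφ i₀).2 (hx i₀) (hy i₀) hi₀ ha hb hab⟩

end Convexity

theorem StrictConvexOn.sum_mul_of_mem_stdSimplex {𝕜 E ι : Type*} [Field 𝕜] [LinearOrder 𝕜]
    [IsStrictOrderedRing 𝕜] [AddCommMonoid E] [Module 𝕜 E] [Fintype ι] {s : Set E}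
    {φ : ι → E → 𝕜} (hφ : ∀ i, StrictConvexOn 𝕜 s (φ i)) {w : ι → 𝕜} (hw : w ∈ stdSimplex 𝕜 ι) :
    StrictConvexOn 𝕜 s fun x => ∑ i, w i * φ i x := by
  obtain ⟨i₀, hi₀⟩ : ∃ i, 0 < w i := by
    by_contra! h
    have : ∑ i, w i = 0 := Finset.sum_eq_zero fun i _ => (h i).antisymm (hw.1 i)
    simp [hw.2] at this
  refine ⟨(hφ i₀).1, fun x hx y hy hxy a b ha hb hab => ?_⟩
  calc ∑ i, w i * φ i (a • x + b • y)
      < ∑ i, w i * (a • φ i x + b • φ i y) :=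
        Finset.sum_lt_sum
          (fun i _ => mul_le_mul_of_nonneg_left ((hφ i).convexOn.2 hx hy ha.le hb.le hab) (hw.1 i))
          ⟨i₀, Finset.mem_univ _, mul_lt_mul_of_pos_left ((hφ i₀).2 hx hy hxy ha hb hab) hi₀⟩
    _ = a • ∑ i, w i * φ i x + b • ∑ i, w i * φ i y := by
        simp only [smul_eq_mul, Finset.mul_sum, ← Finset.sum_add_distrib]
        exact Finset.sum_congr rfl fun i _ => by ring

namespace Matrix

variable {ι : Type*}

theorem convex_setOf_posDef : Convex ℝ {A : Matrix ι ι ℝ | A.PosDef} := by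
  intro A hA B hB a b ha hb hab
  rcases ha.eq_or_lt with rfl | ha
  · simpa [show b = 1 by linarith] using hB
  · exact (hA.smul ha).add_posSemidef (hB.posSemidef.smul hb)

variable [Fintype ι] [DecidableEq ι]

theorem IsHermitian.det_smul_one_add_smul {M : Matrix ι ι ℝ} (hM : M.IsHermitian) (a b : ℝ) :
    (a • (1 : Matrix ι ι ℝ) + b • M).det = ∏ i, (a + b * hM.eigenvalues i) := by
  conv_lhs => rw [hM.spectral_theorem]
  rw [← map_one (Unitary.conjStarAlgAut ℝ _ hM.eigenvectorUnitary), ← map_smul, ← map_smul,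
    ← map_add]
  simp [smul_one_eq_diagonal, ← diagonal_smul, diagonal_add, -Unitary.conjStarAlgAut_apply]

theorem IsHermitian.eq_one_of_eigenvalues_eq_one {M : Matrix ι ι ℝ} (hM : M.IsHermitian)
    (h : ∀ i, hM.eigenvalues i = 1) : M = 1 := by
  rw [hM.spectral_theorem, show hM.eigenvalues = 1 from funext h]
  simp [-Unitary.conjStarAlgAut_apply]

theorem PosDef.mul_log_det_lt_log_det_smul_one_add_smul {M : Matrix ι ι ℝ} (hM : M.PosDef)
    (hM1 : M ≠ 1) {a b : ℝ} (ha : 0 < a) (hb : 0 < b) (hab : a + b = 1) :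
    b * Real.log M.det < Real.log (a • (1 : Matrix ι ι ℝ) + b • M).det := by
  obtain ⟨i₀, hi₀⟩ : ∃ i, hM.1.eigenvalues i ≠ 1 := by
    by_contra! h
    exact hM1 (hM.1.eq_one_of_eigenvalues_eq_one h)
  have hpos := hM.eigenvalues_pos
  rw [hM.1.det_smul_one_add_smul, hM.1.det_eq_prod_eigenvalues]
  simp only [RCLike.ofReal_real_eq_id, id_eq]
  rw [Real.log_prod fun i _ => (hpos i).ne', Real.log_prod fun i _ => by
      have := hpos i; positivity, Finset.mul_sum]
  exact Finset.sum_lt_sum (fun i _ => Real.mul_log_le_log_add_mul ha.le hb.le hab (hpos i))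
    ⟨i₀, Finset.mem_univ _, Real.mul_log_lt_log_add_mul ha hb hab (hpos i₀) hi₀⟩

open scoped MatrixOrder in
theorem strictConcaveOn_log_det :
    StrictConcaveOn ℝ {A : Matrix ι ι ℝ | A.PosDef} fun A => Real.log A.det := by
  refine ⟨convex_setOf_posDef, fun A (hA : A.PosDef) B (hB : B.PosDef) hAB a b ha hb hab => ?_⟩
  set Q := CFC.sqrt A
  have hQ : Q.PosDef := (IsStrictlyPositive.sqrt A hA.isStrictlyPositive).posDef
  have hQdet : IsUnit Q.det := (isUnit_iff_isUnit_det _).1 hQ.isUnit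
  have hQQ : Q * Q = A := CFC.sqrt_mul_sqrt_self A hA.posSemidef.nonneg
  set M := Q⁻¹ * B * Q⁻¹
  have hM : M.PosDef := by
    have hQinv : star Q⁻¹ = Q⁻¹ := hQ.inv.1
    rwa [← (isUnit_nonsing_inv_iff.2 hQ.isUnit).posDef_star_left_conjugate_iff, hQinv] at hB
  have hQMQ : Q * M * Q = B := by
    rw [show M = Q⁻¹ * (B * Q⁻¹) from Matrix.mul_assoc _ _ _, mul_nonsing_inv_cancel_left _ _ hQdet,
      nonsing_inv_mul_cancel_right _ _ hQdet]
  have hM1 : M ≠ 1 := fun h => hAB (by rw [← hQMQ, h, mul_one, hQQ])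
  have hcomb : a • A + b • B = Q * (a • 1 + b • M) * Q := by
    rw [← hQQ, ← hQMQ]
    simp only [Matrix.mul_add, Matrix.add_mul, mul_smul_comm, smul_mul_assoc, mul_one,
      Matrix.mul_assoc]
  have hlog_conj : ∀ X : Matrix ι ι ℝ, X.PosDef →
      Real.log (Q * X * Q).det = Real.log A.det + Real.log X.det := fun X hX => by
    rw [det_mul, det_mul, show Q.det * X.det * Q.det = A.det * X.det by rw [← hQQ, det_mul]; ring,
      Real.log_mul hA.det_pos.ne' hX.det_pos.ne']
  have hcombM : (a • 1 + b • M).PosDef := convex_setOf_posDef PosDef.one hM ha.le hb.le hab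
  have hlt := hM.mul_log_det_lt_log_det_smul_one_add_smul hM1 ha hb hab
  simp only [smul_eq_mul]
  rw [hcomb, hlog_conj _ hcombM, ← hQMQ, hlog_conj _ hM]
  linear_combination hlt + Real.log A.det * hab

theorem PosDef.strictConvexOn_trace_mul_inv_sub_log_det {C : Matrix ι ι ℝ} (hC : C.PosDef)
    (c : ℝ) : StrictConvexOn ℝ {X : Matrix ι ι ℝ | X.PosDef}
      fun X => (X * C⁻¹).trace - Real.log (X * C⁻¹).det - c := by
  have htrace : ConvexOn ℝ {X : Matrix ι ι ℝ | X.PosDef} fun X => (X * C⁻¹).trace :=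
    ((traceLinearMap ι ℝ ℝ).comp (LinearMap.mulRight ℝ C⁻¹)).convexOn convex_setOf_posDef
  refine ((strictConcaveOn_log_det.neg.add_convexOn htrace).add_const
    (-(Real.log C⁻¹.det + c))).congr fun X (hX : X.PosDef) => ?_
  simp only [Pi.add_apply, Pi.neg_apply, det_mul, Real.log_mul hX.det_pos.ne' hC.inv.det_pos.ne']
  ring

theorem isUnit_of_rank_eq_card {K : Type*} [Field K] {A : Matrix ι ι K}
    (h : A.rank = Fintype.card ι) : IsUnit A := by
  rw [← mulVec_surjective_iff_isUnit, ← coe_mulVecLin, ← LinearMap.range_eq_top]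
  exact Submodule.eq_top_of_finrank_eq (by rwa [Module.finrank_fintype_fun_eq_card])

end Matrix

theorem EuclideanSpace.trace_vecMulVec_self {ι : Type*} [Fintype ι] (x : EuclideanSpace ℝ ι) :
    (vecMulVec x x).trace = ‖x‖ ^ 2 := by
  rw [trace_vecMulVec, EuclideanSpace.real_norm_sq_eq]
  simp [dotProduct, sq]

theorem Hlik_strictConvex_general
    (n k m : ℕ)
    (u : Fin k → Fin k → EuclideanSpace ℝ (Fin n))
    (B : Matrix (Fin k) (Fin k) ℝ) (hB : ∀ i j, B i j = ‖u i j‖ ^ 2)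
    (hBrank : B.rank = k)
    (C : Fin k → Fin m → Matrix (Fin n) (Fin n) ℝ)
    (hCpd : ∀ j s, (C j s).PosDef)
    (W : (Fin k → ℝ) → Fin k → Matrix (Fin n) (Fin n) ℝ)
    (hW : ∀ f j, W f j = ∑ i : Fin k, f i • vecMulVec (u i j) (u i j))
    (D : Set (Fin k → ℝ))
    (hD : D = {f ∈ stdSimplex ℝ (Fin k) | ∀ j : Fin k, (W f j).PosDef})
    (Hlik : (Fin k → ℝ) → (Fin m → ℝ) → ℝ)
    (hHlik : ∀ f α, Hlik f α = ∑ s : Fin m, α s *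
      ∑ j : Fin k, ((W f j * (C j s)⁻¹).trace
        - Real.log (W f j * (C j s)⁻¹).det - (n : ℝ))) :
    Convex ℝ D ∧
      ∀ α ∈ stdSimplex ℝ (Fin m), StrictConvexOn ℝ D (fun f => Hlik f α) := by
  set L : Fin k → (Fin k → ℝ) →ₗ[ℝ] Matrix (Fin n) (Fin n) ℝ :=
    fun j => Fintype.linearCombination ℝ fun i => vecMulVec (u i j) (u i j)
  have hWL : ∀ f j, W f j = L j f := fun f j => by rw [hW, Fintype.linearCombination_apply]
  simp only [hWL] at hD hHlik
  have htrace : ∀ f j, (L j f).trace = (f ᵥ* B) j := fun f j => by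
    simp only [L, Fintype.linearCombination_apply, trace_sum, trace_smul,
      EuclideanSpace.trace_vecMulVec_self, ← hB]
    rfl
  have hL : Function.Injective fun f j => L j f := fun f g hfg =>
    vecMul_injective_iff_isUnit.2 (isUnit_of_rank_eq_card (by simpa using hBrank)) <|
      funext fun j => show (f ᵥ* B) j = (g ᵥ* B) j by
        rw [← htrace, ← htrace]; exact congrArg trace (congrFun hfg j)
  set S := {f | ∀ j, L j f ∈ {X : Matrix (Fin n) (Fin n) ℝ | X.PosDef}}
  have hDS : D = stdSimplex ℝ (Fin k) ∩ S := hD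
  have hDconv : Convex ℝ D :=
    hDS ▸ (convex_stdSimplex ℝ _).inter (convex_setOf_posDef.setOf_forall_linearMap_mem L)
  refine ⟨hDconv, fun α hα => StrictConvexOn.subset ?_ (hDS ▸ Set.inter_subset_right) hDconv⟩
  simp only [hHlik]
  exact .sum_mul_of_mem_stdSimplex (fun s => .sum_comp_linearMap_of_injective
    (fun j => (hCpd j s).strictConvexOn_trace_mul_inv_sub_log_det n) L hL) hα

/-- Proposition 3: if the matrix `B` with entries `b_{ij} = ‖u_{ij}‖²` has full
rank `k`, then the domain `D` of pmfs with positive definite covariance fields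
is convex and `H_lik(·; α)` is strictly convex on `D` for every `α ∈ P_m^+`. -/
theorem Hlik_strictConvex
    (n k m : ℕ) (hn : 1 ≤ n) (hk : 1 ≤ k) (hm : 1 ≤ m)
    (u : Fin k → Fin k → EuclideanSpace ℝ (Fin n))
    (B : Matrix (Fin k) (Fin k) ℝ) (hB : ∀ i j, B i j = ‖u i j‖ ^ 2)
    (hBrank : B.rank = k)
    (C : Fin k → Fin m → Matrix (Fin n) (Fin n) ℝ)
    (hCsymm : ∀ j s, (C j s).IsHermitian) (hCpd : ∀ j s, (C j s).PosDef)
    (W : (Fin k → ℝ) → Fin k → Matrix (Fin n) (Fin n) ℝ)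
    (hW : ∀ f j, W f j = ∑ i : Fin k, f i • vecMulVec (u i j) (u i j))
    (D : Set (Fin k → ℝ))
    (hD : D = {f ∈ stdSimplex ℝ (Fin k) | ∀ j : Fin k, (W f j).PosDef})
    (Hlik : (Fin k → ℝ) → (Fin m → ℝ) → ℝ)
    (hHlik : ∀ f α, Hlik f α = ∑ s : Fin m, α s *
      ∑ j : Fin k, ((W f j * (C j s)⁻¹).trace
        - Real.log (W f j * (C j s)⁻¹).det - (n : ℝ))) :
    Convex ℝ D ∧
      ∀ α ∈ stdSimplex ℝ (Fin m), StrictConvexOn ℝ D (fun f => Hlik f α) :=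
  Hlik_strictConvex_general n k m u B hB hBrank C hCpd W hW D hD Hlik hHlik
end

section
/- The function X ↦ log det X is strictly concave on the set of symmetric positive definite real n×n matrices: if X and Y are symmetric positive definite with X ≠ Y and t ∈ (0, 1), then log det(t • X + (1 − t) • Y) > t · log det X + (1 − t) · log det Y. (This strict concavity of the log-determinant on positive definite matrices is the analytic core of the strict convexity of H_lik established in Proposition 3.) -/
/-!
Write `X = Bᴴ B` with `B` invertible and `Y = Bᴴ M B`, where `M = B⁻ᴴ Y B⁻¹` is positive
definite and `M ≠ 1`. Then `t X + (1 - t) Y = Bᴴ (t + (1 - t) M) B`, so after cancelling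
`log det X` the claim becomes `(1 - t) log det M < log det (t + (1 - t) M)`. In an eigenbasis of
`M` this is the sum over the eigenvalues `λᵢ > 0` of `(1 - t) log λᵢ ≤ log (t + (1 - t) λᵢ)`,
the concavity of `log` between `1` and `λᵢ`, which is strict for the eigenvalues `λᵢ ≠ 1`.
-/

theorem Real.one_sub_mul_log_lt_log {x t : ℝ} (hx : 0 < x) (hx1 : x ≠ 1) (ht0 : 0 < t)
    (ht1 : t < 1) : (1 - t) * Real.log x < Real.log (t + (1 - t) * x) := by
  simpa using strictConcaveOn_log_Ioi.2 (Set.mem_Ioi.mpr one_pos) (Set.mem_Ioi.mpr hx)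
    (Ne.symm hx1) ht0 (sub_pos.mpr ht1)

namespace Matrix

variable {ι : Type*} [Fintype ι] [DecidableEq ι]

section RCLike

variable {𝕜 : Type*} [RCLike 𝕜] {A : Matrix ι ι 𝕜}

theorem IsHermitian.det_cfc (hA : A.IsHermitian) (f : ℝ → ℝ) :
    (cfc f A).det = ∏ i, (f (hA.eigenvalues i) : 𝕜) := by
  rw [hA.cfc_eq]
  simp [IsHermitian.cfc, -Unitary.conjStarAlgAut_apply]

theorem IsHermitian.eq_one_of_eigenvalues_eq_one_s11 (hA : A.IsHermitian)
    (h : ∀ i, hA.eigenvalues i = 1) : A = 1 := by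
  calc A = cfc id A := (cfc_id' ℝ A).symm
    _ = cfc (fun _ => 1) A := cfc_congr fun x hx => by
        obtain ⟨i, rfl⟩ := hA.spectrum_real_eq_range_eigenvalues ▸ hx
        exact h i
    _ = 1 := by rw [cfc_const_one ℝ A]

theorem IsHermitian.smul_one_add_smul_eq_cfc (hA : A.IsHermitian) (a b : ℝ) :
    a • (1 : Matrix ι ι 𝕜) + b • A = cfc (fun x => a + b * x) A := by
  rw [cfc_const_add a _ A, cfc_const_mul_id b A, Algebra.algebraMap_eq_smul_one]

end RCLike

theorem log_det_conjTranspose_mul_mul {A B : Matrix ι ι ℝ} (hA : A.det ≠ 0)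
    (hB : B.det ≠ 0) :
    Real.log (Bᴴ * A * B).det = Real.log (Bᴴ * B).det + Real.log A.det := by
  have hBB : (Bᴴ * B).det ≠ 0 := by simp [hB]
  rw [← Real.log_mul hBB hA, det_mul, det_mul, det_mul]
  ring_nf

theorem PosDef.one_sub_mul_log_det_lt {M : Matrix ι ι ℝ} (hM : M.PosDef) (hM1 : M ≠ 1)
    {t : ℝ} (ht0 : 0 < t) (ht1 : t < 1) :
    (1 - t) * Real.log M.det < Real.log (t • (1 : Matrix ι ι ℝ) + (1 - t) • M).det := by
  set ev := hM.isHermitian.eigenvalues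
  obtain ⟨i₀, hi₀⟩ : ∃ i, ev i ≠ 1 := by
    by_contra! h
    exact hM1 (hM.isHermitian.eq_one_of_eigenvalues_eq_one_s11 h)
  have hev : ∀ i, 0 < ev i := hM.eigenvalues_pos
  have hcomb : ∀ i, 0 < t + (1 - t) * ev i := fun i =>
    add_pos ht0 (mul_pos (sub_pos.mpr ht1) (hev i))
  rw [hM.isHermitian.smul_one_add_smul_eq_cfc, hM.isHermitian.det_cfc,
    hM.isHermitian.det_eq_prod_eigenvalues]
  simp only [RCLike.ofReal_real_eq_id, id]
  rw [Real.log_prod fun i _ => (hev i).ne', Real.log_prod fun i _ => (hcomb i).ne',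
    Finset.mul_sum]
  refine Finset.sum_lt_sum (fun i _ => ?_) ⟨i₀, Finset.mem_univ _,
    Real.one_sub_mul_log_lt_log (hev i₀) hi₀ ht0 ht1⟩
  rcases eq_or_ne (ev i) 1 with h | h
  · simp [h]
  · exact (Real.one_sub_mul_log_lt_log (hev i) h ht0 ht1).le

end Matrix

open Matrix
open scoped MatrixOrder Matrix.Norms.L2Operator

theorem logDet_strictConcave_general
    (n : ℕ)
    (X Y : Matrix (Fin n) (Fin n) ℝ) (hX : X.PosDef) (hY : Y.PosDef)
    (hXY : X ≠ Y) (t : ℝ) (ht : t ∈ Set.Ioo (0 : ℝ) 1) :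
    t * Real.log X.det + (1 - t) * Real.log Y.det
      < Real.log (t • X + (1 - t) • Y).det := by
  obtain ⟨ht0, ht1⟩ := ht
  obtain ⟨B, hB, hXB⟩ :=
    CStarAlgebra.isStrictlyPositive_iff_eq_star_mul_self.mp hX.isStrictlyPositive
  have hBdet : IsUnit B.det := (isUnit_iff_isUnit_det B).mp hB
  set M := (B⁻¹)ᴴ * Y * B⁻¹
  have hM : M.PosDef := hY.conjTranspose_mul_mul_same
    (mulVec_injective_iff_isUnit.mpr (isUnit_nonsing_inv_iff.mpr hB))
  have hYM : Y = Bᴴ * M * B := by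
    rw [← mul_assoc, ← mul_assoc, ← conjTranspose_mul, nonsing_inv_mul B hBdet,
      conjTranspose_one, one_mul, mul_assoc, nonsing_inv_mul B hBdet, mul_one]
  have hcomb : t • X + (1 - t) • Y = Bᴴ * (t • 1 + (1 - t) • M) * B := by
    rw [hXB, hYM, Matrix.mul_add, Matrix.add_mul, Matrix.mul_smul, Matrix.smul_mul,
      Matrix.mul_smul, Matrix.smul_mul, mul_one, star_eq_conjTranspose]
  have hM1 : M ≠ 1 := fun h => hXY (by rw [hYM, h, mul_one, hXB, star_eq_conjTranspose])
  have hN : (t • (1 : Matrix (Fin n) (Fin n) ℝ) + (1 - t) • M).PosDef :=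
    (PosDef.one.smul ht0).add (hM.smul (sub_pos.mpr ht1))
  rw [hcomb, hYM, log_det_conjTranspose_mul_mul hM.det_pos.ne' hBdet.ne_zero,
    log_det_conjTranspose_mul_mul hN.det_pos.ne' hBdet.ne_zero, ← star_eq_conjTranspose, ← hXB]
  have := hM.one_sub_mul_log_det_lt hM1 ht0 ht1
  linarith

/-- Strict concavity of `log det` on symmetric positive definite matrices:
for `X ≠ Y` positive definite and `t ∈ (0,1)`,
`log det(t•X + (1−t)•Y) > t·log det X + (1−t)·log det Y`. -/
theorem logDet_strictConcave
    (n : ℕ) (hn : 1 ≤ n)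
    (X Y : Matrix (Fin n) (Fin n) ℝ) (hX : X.PosDef) (hY : Y.PosDef)
    (hXY : X ≠ Y) (t : ℝ) (ht : t ∈ Set.Ioo (0 : ℝ) 1) :
    t * Real.log X.det + (1 - t) * Real.log Y.det
      < Real.log (t • X + (1 - t) • Y).det :=
  logDet_strictConcave_general n X Y hX hY hXY t ht
end
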